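/- arXiv:1505.01305 — 4 statements merged into one kernel-verified Lean document; each statement's English description precedes it below -/
import Mathlib

section
/- With μ defined by the recursion μ(k₀,k₁,...,kₙ) = a(k₀,k₁)μ(k₁,...,kₙ) + b(k₀,k₁)μ(k₂,...,kₙ) (with μ(i)=1/2, μ(j₁,j₂) = (1-β_{j₁}β_{j₂})/4), the family of cylinder measures is shift-consistent under appending: μ(k₀,...,kₙ) = μ(k₀,...,kₙ,1) + μ(k₀,...,kₙ,2) for every string. -/
open Real

/-- β₁ = sin 2θ, β₂ = -sin 2θ (symbol 0 stands for "1", symbol 1 for "2"). -/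
noncomputable def beta (θ : ℝ) : Fin 2 → ℝ := ![sin (2 * θ), -sin (2 * θ)]

noncomputable def gamma (θ : ℝ) : ℝ := (1 - sin (2 * θ) ^ 2) / 4

/-- a(i,j) = 0 if i = j, 1 otherwise. -/
noncomputable def aCoef (i j : Fin 2) : ℝ := if i = j then 0 else 1

/-- b(i,j) = γ if i = j, -γ otherwise. -/
noncomputable def bCoef (θ : ℝ) (i j : Fin 2) : ℝ := if i = j then gamma θ else -gamma θ

/-- The cylinder measure μ on finite strings over {1,2}. -/
noncomputable def mu (θ : ℝ) : List (Fin 2) → ℝ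
  | [] => 1
  | [_] => 1 / 2
  | [i, j] => (1 - beta θ i * beta θ j) / 4
  | k0 :: k1 :: k2 :: rest =>
      aCoef k0 k1 * mu θ (k1 :: k2 :: rest) + bCoef θ k0 k1 * mu θ (k2 :: rest)

/-!
The recursion for μ is linear in μ, and the values on strings of length two are exactly what the
recursion gives from μ(i) = 1/2 and μ() = 1 (this is where γ = (1 - β₁²)/4 is used). Hence the
recursion holds for every string of length at least two, and consistency under appending passes
from the two shorter strings to the longer one. The base case of one letter is β₁ + β₂ = 0.
-/

theorem beta_zero_add_beta_one (θ : ℝ) : beta θ 0 + beta θ 1 = 0 := by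
  simp [beta]

theorem mu_pair_eq (θ : ℝ) (i j : Fin 2) :
    mu θ [i, j] = aCoef i j * mu θ [j] + bCoef θ i j * mu θ [] := by
  fin_cases i <;> fin_cases j <;> simp [mu, beta, aCoef, bCoef, gamma] <;> ring

theorem mu_cons_cons (θ : ℝ) (i j : Fin 2) :
    ∀ t : List (Fin 2), mu θ (i :: j :: t) = aCoef i j * mu θ (j :: t) + bCoef θ i j * mu θ t
  | [] => mu_pair_eq θ i j
  | _ :: _ => rfl

theorem mu_append_zero_add_mu_append_one (θ : ℝ) :
    ∀ l : List (Fin 2), mu θ (l ++ [0]) + mu θ (l ++ [1]) = mu θ l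
  | [] => by norm_num [mu]
  | [i] => by
    simp only [List.cons_append, List.nil_append, mu]
    linear_combination (-beta θ i / 4) * beta_zero_add_beta_one θ
  | i :: j :: t => by
    have hjt := mu_append_zero_add_mu_append_one θ (j :: t)
    have ht := mu_append_zero_add_mu_append_one θ t
    simp only [List.cons_append, mu_cons_cons] at hjt ⊢
    linear_combination aCoef i j * hjt + bCoef θ i j * ht

theorem mu_consistent_append_general (θ : ℝ) (k : Fin 2) (l : List (Fin 2)) :
    mu θ (k :: l) = mu θ ((k :: l) ++ [0]) + mu θ ((k :: l) ++ [1]) :=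
  (mu_append_zero_add_mu_append_one θ (k :: l)).symm

/-- Shift-consistency under appending: μ(k₀,...,kₙ) = μ(k₀,...,kₙ,1) + μ(k₀,...,kₙ,2). -/
theorem mu_consistent_append (θ : ℝ) (hθ : θ ∈ Set.Ioo 0 (π / 2)) (hθ' : θ ≠ π / 4)
    (k : Fin 2) (l : List (Fin 2)) :
    mu θ (k :: l) = mu θ ((k :: l) ++ [0]) + mu θ ((k :: l) ++ [1]) :=
  mu_consistent_append_general θ k l
end

section
/- For every n ≥ 1 the cylinder measures satisfy the expansion μ(k, j₁,...,jₙ) = μ(j₁,...,jₙ)/2 - (β_k β_{j₁}/4)μ(j₂,...,jₙ) + (β_k β_{j₂}/8)μ(j₃,...,jₙ) - ... + (-1)^{n-2}(β_k β_{j_{n-2}}/2^{n-1})μ(j_{n-1},jₙ) + (-1)^{n-1}β_k β_{j_{n-1}}/2^{n+1} + (-1)^n β_k β_{jₙ}/2^{n+1}. -/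
open Real

/-!
The measure `μ(k, j)` is affine in `β_k`: `μ(k, j) = μ(j)/2 + β_k T(j)` with `T = muTail`. Feeding this into the
recursion for `μ` and using `a(k,a) β_a = (β_a - β_k)/2` and `a(k,a)/2 + b(k,a) = (1 - β_k β_a)/4`
shows that `T(a, r) = -β_a μ(r)/4 - T(r)/2` with `T(∅) = 0` works. Unrolling this recursion gives
the alternating sum; its last two terms are the ones where `μ` is evaluated at a single letter
(`1/2`) and at the empty word (`1`).
-/

noncomputable def muTail (θ : ℝ) : List (Fin 2) → ℝ
  | [] => 0
  | a :: rest => -beta θ a * mu θ rest / 4 - muTail θ rest / 2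

lemma aCoef_mul_beta (θ : ℝ) (k a : Fin 2) :
    aCoef k a * beta θ a = (beta θ a - beta θ k) / 2 := by
  fin_cases k <;> fin_cases a <;> simp [aCoef, beta]; ring

lemma aCoef_div_two_add_bCoef (θ : ℝ) (k a : Fin 2) :
    aCoef k a / 2 + bCoef θ k a = (1 - beta θ k * beta θ a) / 4 := by
  fin_cases k <;> fin_cases a <;> simp [aCoef, bCoef, gamma, beta] <;> ring

lemma mu_cons (θ : ℝ) (k : Fin 2) (j : List (Fin 2)) :
    mu θ (k :: j) = mu θ j / 2 + beta θ k * muTail θ j := by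
  induction j generalizing k with
  | nil => simp [mu, muTail]
  | cons a t ih =>
    cases t with
    | nil => simp only [mu, muTail]; ring
    | cons b rest =>
      have hrec : mu θ (k :: a :: b :: rest)
          = aCoef k a * mu θ (a :: b :: rest) + bCoef θ k a * mu θ (b :: rest) := rfl
      rw [hrec, ih a, muTail.eq_2 θ a (b :: rest)]
      linear_combination mu θ (b :: rest) * aCoef_div_two_add_bCoef θ k a
        + muTail θ (b :: rest) * aCoef_mul_beta θ k a

lemma muTail_eq_sum (θ : ℝ) (j : List (Fin 2)) :
    muTail θ j = ∑ i ∈ Finset.range j.length,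
      (-1 : ℝ) ^ (i + 1) * beta θ (j.getD i 0) / 2 ^ (i + 2) * mu θ (j.drop (i + 1)) := by
  induction j with
  | nil => simp [muTail]
  | cons a t ih =>
    rw [muTail, ih, List.length_cons, Finset.sum_range_succ', add_comm, sub_eq_add_neg,
      Finset.sum_div, ← Finset.sum_neg_distrib]
    congr 1
    · simp only [List.getD_cons_zero, zero_add, List.drop_one, List.tail_cons]
      ring
    · refine Finset.sum_congr rfl fun i _ => ?_
      simp only [List.getD_cons_succ, List.drop_succ_cons]
      ring

theorem mu_expansion_general (θ : ℝ)
    (k : Fin 2) (j : List (Fin 2)) (hn : 2 ≤ j.length) :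
    mu θ (k :: j) =
      mu θ j / 2
      + ∑ i ∈ Finset.range (j.length - 2),
          (-1 : ℝ) ^ (i + 1) * beta θ k * beta θ (j.getD i 0) / 2 ^ (i + 2)
            * mu θ (j.drop (i + 1))
      + (-1 : ℝ) ^ (j.length - 1) * beta θ k * beta θ (j.getD (j.length - 2) 0)
          / 2 ^ (j.length + 1)
      + (-1 : ℝ) ^ j.length * beta θ k * beta θ (j.getD (j.length - 1) 0)
          / 2 ^ (j.length + 1) := by
  obtain ⟨m, hm⟩ : ∃ m, j.length = m + 2 := ⟨j.length - 2, by omega⟩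
  have h_last : j.drop (m + 2) = [] := List.drop_eq_nil_of_le (by omega)
  obtain ⟨b, hb⟩ : ∃ b, j.drop (m + 1) = [b] :=
    List.length_eq_one_iff.mp (by simp [hm])
  rw [mu_cons, muTail_eq_sum, hm, Finset.sum_range_succ, Finset.sum_range_succ, h_last, hb,
    mul_add, mul_add, Finset.mul_sum]
  simp only [Nat.add_sub_cancel, show m + 2 - 1 = m + 1 by omega, mu]
  have hterm : ∀ i ∈ Finset.range m,
      beta θ k * ((-1) ^ (i + 1) * beta θ (j.getD i 0) / 2 ^ (i + 2) * mu θ (j.drop (i + 1)))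
        = (-1) ^ (i + 1) * beta θ k * beta θ (j.getD i 0) / 2 ^ (i + 2) * mu θ (j.drop (i + 1)) :=
    fun i _ => by ring
  rw [Finset.sum_congr rfl hterm]
  ring

/-- The expansion of μ(k, j₁,...,jₙ) as an alternating sum
(here j i = j.getD (i-1) 0, i.e. lists are 0-indexed). -/
theorem mu_expansion (θ : ℝ) (hθ : θ ∈ Set.Ioo 0 (π / 2))
    (k : Fin 2) (j : List (Fin 2)) (hn : 2 ≤ j.length) :
    mu θ (k :: j) =
      mu θ j / 2
      + ∑ i ∈ Finset.range (j.length - 2),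
          (-1 : ℝ) ^ (i + 1) * beta θ k * beta θ (j.getD i 0) / 2 ^ (i + 2)
            * mu θ (j.drop (i + 1))
      + (-1 : ℝ) ^ (j.length - 1) * beta θ k * beta θ (j.getD (j.length - 2) 0)
          / 2 ^ (j.length + 1)
      + (-1 : ℝ) ^ j.length * beta θ k * beta θ (j.getD (j.length - 1) 0)
          / 2 ^ (j.length + 1) :=
  mu_expansion_general θ k j hn
end

section
/- If θ ≠ π/4 (so 0 < β₁ < 1), then μ is strictly positive on every cylinder: μ(x₀,...,xₙ) > 0 for every finite string. -/
open Real

/-! Write `s = sin 2θ`, `p = (1 - s)/2` and `q = (1 + s)/2`, so that `γ = p q`.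
For `0 ≤ s`, prepending a symbol to a string multiplies its measure by a factor in `[p, q]`:
by the recursion, `μ(k k w) = p q μ(w)` and `μ(j k w) = μ(k w) - p q μ(w)` for `j ≠ k`,
and each of the four required inequalities is the bound for `μ(k w)` against `μ(w)`
scaled by `p` or `q`. When moreover `s < 1` the factor `p` is positive, so every cylinder has
positive measure. -/

namespace Real

lemma sin_two_mul_lt_one {θ : ℝ} (hθ : θ ∈ Set.Ioo 0 (π / 2)) (hθ' : θ ≠ π / 4) :
    sin (2 * θ) < 1 := by
  obtain ⟨h0, hπ⟩ := hθ
  refine (sin_le_one _).lt_of_ne fun hsin => hθ' ?_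
  have hcos : cos (2 * θ) = cos (π / 2) := by
    rw [cos_pi_div_two, ← sq_eq_zero_iff, cos_sq', hsin]
    norm_num
  have := injOn_cos ⟨by linarith, by linarith⟩ ⟨by positivity, by linarith [pi_pos]⟩ hcos
  linarith

end Real

section

variable {θ : ℝ}

lemma gamma_eq_mul : gamma θ = (1 - sin (2 * θ)) / 2 * ((1 + sin (2 * θ)) / 2) := by
  unfold gamma
  ring

lemma mu_cons_cons_self (k : Fin 2) (w : List (Fin 2)) (hw : w ≠ []) :
    mu θ (k :: k :: w) = gamma θ * mu θ w := by
  obtain ⟨a, w, rfl⟩ := List.exists_cons_of_ne_nil hw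
  simp [mu, aCoef, bCoef]

lemma mu_cons_cons_of_ne {j k : Fin 2} (hjk : j ≠ k) (w : List (Fin 2)) (hw : w ≠ []) :
    mu θ (j :: k :: w) = mu θ (k :: w) - gamma θ * mu θ w := by
  obtain ⟨a, w, rfl⟩ := List.exists_cons_of_ne_nil hw
  simp [mu, aCoef, bCoef, hjk]
  ring

lemma mu_cons_bounds (hs : 0 ≤ sin (2 * θ)) (w : List (Fin 2)) (j : Fin 2) :
    (1 - sin (2 * θ)) / 2 * mu θ w ≤ mu θ (j :: w) ∧
      mu θ (j :: w) ≤ (1 + sin (2 * θ)) / 2 * mu θ w := by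
  have hs1 := sin_le_one (2 * θ)
  induction w generalizing j with
  | nil => simp only [mu]; constructor <;> linarith
  | cons k w ih =>
    rcases eq_or_ne w [] with rfl | hw
    · fin_cases j <;> fin_cases k <;>
        simp only [mu, beta, Fin.zero_eta, Fin.mk_one, Matrix.cons_val_zero,
          Matrix.cons_val_one] <;>
        constructor <;> nlinarith
    obtain ⟨hlow, hupp⟩ := ih k
    have hp : 0 ≤ (1 - sin (2 * θ)) / 2 := by linarith
    have hq : 0 ≤ (1 + sin (2 * θ)) / 2 := by linarith
    have hlow' := mul_le_mul_of_nonneg_left hlow hq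
    have hupp' := mul_le_mul_of_nonneg_left hupp hp
    rcases eq_or_ne j k with rfl | hjk
    · rw [mu_cons_cons_self j w hw, gamma_eq_mul]
      constructor <;> nlinarith
    · rw [mu_cons_cons_of_ne hjk w hw, gamma_eq_mul]
      constructor <;> nlinarith

lemma mu_pos_of_sin_lt_one (hs0 : 0 ≤ sin (2 * θ)) (hs1 : sin (2 * θ) < 1) :
    ∀ w : List (Fin 2), 0 < mu θ w
  | [] => by simp [mu]
  | j :: w =>
    calc 0 < (1 - sin (2 * θ)) / 2 * mu θ w :=
          mul_pos (by linarith) (mu_pos_of_sin_lt_one hs0 hs1 w)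
      _ ≤ mu θ (j :: w) := (mu_cons_bounds hs0 w j).1

end

theorem mu_pos_general (θ : ℝ) (hθ : θ ∈ Set.Ioo 0 (π / 2)) (hθ' : θ ≠ π / 4)
    (l : List (Fin 2)) :
    0 < mu θ l := by
  have hs0 : 0 ≤ sin (2 * θ) :=
    sin_nonneg_of_nonneg_of_le_pi (by linarith [hθ.1]) (by linarith [hθ.2])
  exact mu_pos_of_sin_lt_one hs0 (sin_two_mul_lt_one hθ hθ') l

/-- If θ ≠ π/4 then μ is strictly positive on every cylinder. -/
theorem mu_pos (θ : ℝ) (hθ : θ ∈ Set.Ioo 0 (π / 2)) (hθ' : θ ≠ π / 4)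
    (l : List (Fin 2)) (hl : l ≠ []) :
    0 < mu θ l :=
  mu_pos_general θ hθ hθ' l
end

section
/- For the finite-level Jacobians Jⁿ(x) := μ(x₀,...,xₙ)/μ(x₁,...,xₙ), the bounds γ ≤ Jⁿ(x) ≤ 1 - γ hold for all n ≥ 2 and all x ∈ {1,2}^ℕ, where γ = (1-β₁²)/4. -/
open Real

/-!
Writing `s = sin 2θ`, the Jacobian `J(a :: l) = μ(a :: l) / μ(l)` satisfies `J(a :: a :: l) = γ / J(a :: l)`
and `J(a :: b :: l) = 1 - γ / J(b :: l)` for `a ≠ b`, also for `l = []`. Since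
`γ = (1 - s)/2 · (1 + s)/2`, both maps `t ↦ γ / t` and `t ↦ 1 - γ / t` preserve the interval
`[(1 - s)/2, (1 + s)/2]`, which contains `J([a]) = 1/2` and lies inside `[γ, 1 - γ]`.
Induction on the string, multiplied out so that it also yields `μ > 0`, gives the bounds.
-/

lemma sin_lt_one_of_mem_Ioo {t : ℝ} (ht : t ∈ Set.Ioo 0 π) (ht' : t ≠ π / 2) : sin t < 1 := by
  obtain ⟨ht0, htπ⟩ := ht
  rw [← sin_pi_div_two]
  rcases ht'.lt_or_gt with hlt | hgt
  · exact sin_lt_sin_of_lt_of_le_pi_div_two (by linarith) le_rfl hlt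
  · rw [← sin_pi_sub t]
    exact sin_lt_sin_of_lt_of_le_pi_div_two (by linarith) le_rfl (by linarith)

section

variable {θ : ℝ}

lemma mu_cons_self_cons (a : Fin 2) (l : List (Fin 2)) :
    mu θ (a :: a :: l) = gamma θ * mu θ l := by
  rcases l with _ | ⟨c, l⟩
  · fin_cases a <;> simp [mu, beta, gamma] <;> ring
  · simp [mu, aCoef, bCoef]

lemma mu_cons_cons_of_ne_s12 {a b : Fin 2} (hab : a ≠ b) (l : List (Fin 2)) :
    mu θ (a :: b :: l) = mu θ (b :: l) - gamma θ * mu θ l := by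
  rcases l with _ | ⟨c, l⟩
  · fin_cases a <;> fin_cases b <;> simp_all [mu, beta, gamma] <;> ring
  · simp only [mu, aCoef, bCoef, hab, if_false, one_mul, neg_mul]
    ring

theorem mu_pos_and_mu_cons_mem_Icc (hs₀ : 0 ≤ sin (2 * θ)) (hs₁ : sin (2 * θ) < 1)
    (l : List (Fin 2)) (a : Fin 2) :
    0 < mu θ l ∧ mu θ (a :: l) ∈
      Set.Icc ((1 - sin (2 * θ)) / 2 * mu θ l) ((1 + sin (2 * θ)) / 2 * mu θ l) := by
  induction l generalizing a with
  | nil => refine ⟨one_pos, ?_, ?_⟩ <;> simp only [mu] <;> linarith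
  | cons b l ih =>
    obtain ⟨hl, hbl_lower, hbl_upper⟩ := ih b
    have hbl : 0 < mu θ (b :: l) := lt_of_lt_of_le (by positivity) hbl_lower
    have hγ_lower : (1 - sin (2 * θ)) / 2 * mu θ (b :: l) ≤ gamma θ * mu θ l := by
      rw [gamma_eq_mul, mul_assoc]
      exact mul_le_mul_of_nonneg_left hbl_upper (by linarith)
    have hγ_upper : gamma θ * mu θ l ≤ (1 + sin (2 * θ)) / 2 * mu θ (b :: l) := by
      rw [gamma_eq_mul, mul_comm ((1 - _) / 2), mul_assoc]
      exact mul_le_mul_of_nonneg_left hbl_lower (by linarith)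
    refine ⟨hbl, ?_⟩
    rcases eq_or_ne a b with rfl | hab
    · rw [mu_cons_self_cons]
      exact ⟨hγ_lower, hγ_upper⟩
    · rw [mu_cons_cons_of_ne_s12 hab]
      constructor <;> linarith

end

theorem jacobian_bounds_general (θ : ℝ) (hθ : θ ∈ Set.Ioo 0 (π / 2)) (hθ' : θ ≠ π / 4)
    (x : ℕ → Fin 2) (n : ℕ) :
    gamma θ ≤ mu θ (List.ofFn fun i : Fin (n + 1) => x i)
                / mu θ (List.ofFn fun i : Fin n => x (i + 1)) ∧
    mu θ (List.ofFn fun i : Fin (n + 1) => x i)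
        / mu θ (List.ofFn fun i : Fin n => x (i + 1)) ≤ 1 - gamma θ := by
  obtain ⟨hθ₀, hθ₁⟩ := hθ
  have hs₀ : 0 ≤ sin (2 * θ) := sin_nonneg_of_nonneg_of_le_pi (by linarith) (by linarith)
  have hs₁ : sin (2 * θ) < 1 :=
    sin_lt_one_of_mem_Ioo ⟨by linarith, by linarith⟩ fun h => hθ' (by linarith)
  have hcons : (List.ofFn fun i : Fin (n + 1) => x i) =
      x 0 :: List.ofFn fun i : Fin n => x (i + 1) := by
    rw [List.ofFn_succ]
    simp only [Fin.val_succ, Fin.val_zero]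
  rw [hcons]
  obtain ⟨hpos, hlower, hupper⟩ :=
    mu_pos_and_mu_cons_mem_Icc hs₀ hs₁ (List.ofFn fun i : Fin n => x (i + 1)) (x 0)
  have hγ_le : gamma θ ≤ (1 - sin (2 * θ)) / 2 := by
    rw [gamma_eq_mul]
    nlinarith
  have hle_one_sub_γ : (1 + sin (2 * θ)) / 2 ≤ 1 - gamma θ := by
    unfold gamma
    nlinarith [sq_nonneg (1 - sin (2 * θ))]
  exact ⟨hγ_le.trans ((le_div_iff₀ hpos).2 hlower),
    ((div_le_iff₀ hpos).2 hupper).trans hle_one_sub_γ⟩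

/-- Bounds on the finite-level Jacobians:
γ ≤ μ(x₀,...,xₙ)/μ(x₁,...,xₙ) ≤ 1 - γ for all n ≥ 2. -/
theorem jacobian_bounds (θ : ℝ) (hθ : θ ∈ Set.Ioo 0 (π / 2)) (hθ' : θ ≠ π / 4)
    (x : ℕ → Fin 2) (n : ℕ) (hn : 2 ≤ n) :
    gamma θ ≤ mu θ (List.ofFn fun i : Fin (n + 1) => x i)
                / mu θ (List.ofFn fun i : Fin n => x (i + 1)) ∧
    mu θ (List.ofFn fun i : Fin (n + 1) => x i)
        / mu θ (List.ofFn fun i : Fin n => x (i + 1)) ≤ 1 - gamma θ :=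
  jacobian_bounds_general θ hθ hθ' x n
end
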